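/- arXiv:2106.01388 — 3 statements merged into one kernel-verified Lean document; each statement's English description precedes it below -/
import Mathlib

section
/- Let f(θ) = ⟨ψ| e^{iθG} A e^{-iθG} |ψ⟩ with G Hermitian, G² = r²I, A Hermitian. Then there exist real constants a, b, c such that f(θ) = a + b·sin(2rθ) + c·cos(2rθ) for all θ. -/
/-!
Because `G * G = r² • 1`, the exponential series of `z • G` collapses to
`cosh (z r) • 1 + (sinh (z r) / r) • G`. Conjugating `A` by it and using the double-angle formulas,
the evolved observable is `P / 2 + (sin (2 r θ) / (2 r)) • i[G, A] + (cos (2 r θ) / 2) • Q` with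
`θ`-independent `P = A + G A G / r²` and `Q = A - G A G / r²`; its expectation is therefore of the
claimed form.
-/

open Matrix Complex

section

variable {𝔸 : Type*} [Ring 𝔸] [Algebra ℂ 𝔸] [TopologicalSpace 𝔸] [IsTopologicalRing 𝔸]
  [ContinuousSMul ℂ 𝔸] [T2Space 𝔸] {x : 𝔸} {w : ℂ}

theorem exp_smul_of_mul_self_eq (hw : w ≠ 0) (hx : x * x = w ^ 2 • 1) (z : ℂ) :
    NormedSpace.exp (z • x) = cosh (z * w) • 1 + (sinh (z * w) / w) • x := by
  have hpow : ∀ k : ℕ, x ^ (2 * k) = (w ^ 2) ^ k • 1 := fun k => by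
    rw [pow_mul, sq, hx, smul_pow, one_pow]
  rw [NormedSpace.exp_eq_tsum ℂ]
  refine HasSum.tsum_eq (HasSum.even_add_odd ?_ ?_)
  · convert (hasSum_cosh (z * w)).smul_const (1 : 𝔸) using 2 with k
    rw [smul_pow, hpow, smul_smul, smul_smul]
    ring_nf
  · convert ((hasSum_sinh (z * w)).div_const w).smul_const x using 2 with k
    rw [smul_pow, pow_succ x, hpow, smul_mul_assoc, one_mul, smul_smul, smul_smul]
    congr 1
    field_simp
    ring

theorem exp_smul_mul_mul_exp_neg_smul (hw : w ≠ 0) (hx : x * x = w ^ 2 • 1) (z : ℂ) (a : 𝔸) :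
    NormedSpace.exp (z • x) * a * NormedSpace.exp ((-z) • x) =
      (1 / 2 : ℂ) • (a + (w ^ 2)⁻¹ • (x * a * x)) + (sinh (2 * z * w) / (2 * w)) • (x * a - a * x)
        + (cosh (2 * z * w) / 2) • (a - (w ^ 2)⁻¹ • (x * a * x)) := by
  rw [exp_smul_of_mul_self_eq hw hx, exp_smul_of_mul_self_eq hw hx, neg_mul, cosh_neg, sinh_neg,
    mul_assoc 2, cosh_two_mul, sinh_two_mul]
  simp only [add_mul, mul_add, smul_mul_assoc, mul_smul_comm, one_mul, mul_one, mul_assoc]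
  match_scalars
  · linear_combination (1 / 2 : ℂ) * cosh_sq_sub_sinh_sq (z * w)
  · ring
  · ring
  · linear_combination (w ^ 2)⁻¹ / 2 * cosh_sq_sub_sinh_sq (z * w)

theorem exp_I_smul_mul_mul_exp_neg_I_smul {r : ℝ} (hr : r ≠ 0) (hx : x * x = (r : ℂ) ^ 2 • 1)
    (θ : ℝ) (a : 𝔸) :
    NormedSpace.exp ((I * θ) • x) * a * NormedSpace.exp ((-(I * θ)) • x) =
      (1 / 2 : ℂ) • (a + ((r : ℂ) ^ 2)⁻¹ • (x * a * x))
        + (I * Real.sin (2 * r * θ) / (2 * r)) • (x * a - a * x)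
        + (Real.cos (2 * r * θ) / 2 : ℂ) • (a - ((r : ℂ) ^ 2)⁻¹ • (x * a * x)) := by
  have h : 2 * (I * θ) * r = ((2 * r * θ : ℝ) : ℂ) * I := by push_cast; ring
  rw [exp_smul_mul_mul_exp_neg_smul (ofReal_ne_zero.mpr hr) hx, h, sinh_mul_I, cosh_mul_I,
    ← ofReal_sin, ← ofReal_cos, mul_comm _ I]

end

theorem stmt_6_general {n : ℕ} (ψ : Fin n → ℂ)
    (A G : Matrix (Fin n) (Fin n) ℂ)
    (r : ℝ) (hr : 0 < r)
    (hG2 : G * G = ((r : ℂ) ^ 2) • (1 : Matrix (Fin n) (Fin n) ℂ))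
    (f : ℝ → ℝ)
    (hf : ∀ θ : ℝ, f θ =
      (star ψ ⬝ᵥ ((NormedSpace.exp ((Complex.I * (θ : ℂ)) • G) * A *
        NormedSpace.exp ((-(Complex.I * (θ : ℂ))) • G)) *ᵥ ψ)).re) :
    ∃ a b c : ℝ, ∀ θ : ℝ,
      f θ = a + b * Real.sin (2 * r * θ) + c * Real.cos (2 * r * θ) := by
  set φ : Matrix (Fin n) (Fin n) ℂ → ℂ := fun M => star ψ ⬝ᵥ (M *ᵥ ψ)
  refine ⟨(φ (A + ((r : ℂ) ^ 2)⁻¹ • (G * A * G))).re / 2, -(φ (G * A - A * G)).im / (2 * r),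
    (φ (A - ((r : ℂ) ^ 2)⁻¹ • (G * A * G))).re / 2, fun θ => ?_⟩
  rw [hf, exp_I_smul_mul_mul_exp_neg_I_smul hr.ne' hG2]
  generalize A + ((r : ℂ) ^ 2)⁻¹ • (G * A * G) = P
  generalize G * A - A * G = K
  generalize A - ((r : ℂ) ^ 2)⁻¹ • (G * A * G) = Q
  simp only [φ, add_mulVec, smul_mulVec, dotProduct_add, dotProduct_smul, smul_eq_mul]
  have h_half : (1 / 2 : ℂ) = ((1 / 2 : ℝ) : ℂ) := by push_cast; rfl
  have h_sin :
      I * Real.sin (2 * r * θ) / (2 * r) = I * ((Real.sin (2 * r * θ) / (2 * r) : ℝ) : ℂ) := by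
    push_cast; ring
  have h_cos : (Real.cos (2 * r * θ) / 2 : ℂ) = ((Real.cos (2 * r * θ) / 2 : ℝ) : ℂ) := by push_cast; rfl
  rw [h_half, h_sin, h_cos, add_re, add_re, re_ofReal_mul, re_ofReal_mul, mul_assoc, I_mul_re,
    im_ofReal_mul]
  ring

theorem stmt_6 {n : ℕ} (ψ : Fin n → ℂ) (hψ : star ψ ⬝ᵥ ψ = 1)
    (A G : Matrix (Fin n) (Fin n) ℂ) (hA : A.IsHermitian) (hG : G.IsHermitian)
    (r : ℝ) (hr : 0 < r)
    (hG2 : G * G = ((r : ℂ) ^ 2) • (1 : Matrix (Fin n) (Fin n) ℂ))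
    (f : ℝ → ℝ)
    (hf : ∀ θ : ℝ, f θ =
      (star ψ ⬝ᵥ ((NormedSpace.exp ((Complex.I * (θ : ℂ)) • G) * A *
        NormedSpace.exp ((-(Complex.I * (θ : ℂ))) • G)) *ᵥ ψ)).re) :
    ∃ a b c : ℝ, ∀ θ : ℝ,
      f θ = a + b * Real.sin (2 * r * θ) + c * Real.cos (2 * r * θ) :=
  stmt_6_general ψ A G r hr hG2 f hf
end

section
/- Fix r > 0 and 0 < γ < π/r. There exist two functions f, f̃ of the form f(θ) = ⟨ψ| e^{iθG} A e^{-iθG} |ψ⟩ and f̃(θ) = ⟨ψ̃| e^{iθF} B e^{-iθF} |ψ̃⟩ (with ψ, ψ̃ unit vectors in ℂ², A, B Hermitian, and G, F Hermitian with G² = F² = r²I) and a point ζ ∈ ℝ such that f(ζ) = f̃(ζ) and f(ζ + γ) = f̃(ζ + γ), but f'(ζ) ≠ f̃'(ζ). -/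
/-!
Take both generators equal to `r Z = diag(r, -r)`. Conjugation by `exp(iθ r Z)` multiplies the
off-diagonal entries of an observable by `e^{±2irθ}` and fixes scalars, so the observable
`cos(rγ) I` in the state `|0⟩` gives the constant function `cos(rγ)`, while `X` in the state
`(|0⟩ + |1⟩)/√2` gives `cos(2rθ)`. At `ζ = -γ/2` both functions equal `cos(rγ)` at `ζ` and at
`ζ + γ`, by evenness of the cosine, but the derivative of `cos(2rθ)` there is
`2r sin(rγ) > 0`, because `0 < rγ < π`.
-/

open Matrix

noncomputable def gateExpectation {n : Type*} [Fintype n] [DecidableEq n] (ψ : n → ℂ)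
    (G A : Matrix n n ℂ) (θ : ℝ) : ℝ :=
  (star ψ ⬝ᵥ ((NormedSpace.exp ((Complex.I * (θ : ℂ)) • G) * A *
    NormedSpace.exp ((-(Complex.I * (θ : ℂ))) • G)) *ᵥ ψ)).re

section

variable {n : Type*} [Fintype n] [DecidableEq n]

theorem exp_mul_exp_neg (X : Matrix n n ℂ) :
    NormedSpace.exp X * NormedSpace.exp (-X) = 1 := by
  rw [Matrix.exp_neg, mul_nonsing_inv _ ((isUnit_exp X).map detMonoidHom)]

theorem gateExpectation_smul_one (ψ : n → ℂ) (G : Matrix n n ℂ) (a θ : ℝ) :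
    gateExpectation ψ G ((a : ℂ) • 1) θ = a * (star ψ ⬝ᵥ ψ).re := by
  have hconj : NormedSpace.exp ((Complex.I * (θ : ℂ)) • G) * ((a : ℂ) • 1) *
      NormedSpace.exp ((-(Complex.I * (θ : ℂ))) • G) = (a : ℂ) • 1 := by
    rw [Matrix.mul_smul, Matrix.smul_mul, mul_one, neg_smul, exp_mul_exp_neg]
  rw [gateExpectation, hconj, smul_mulVec, one_mulVec, dotProduct_smul, smul_eq_mul,
    Complex.re_ofReal_mul]

theorem exp_smul_diagonal (c : ℂ) (d : n → ℂ) :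
    NormedSpace.exp (c • diagonal d) = diagonal fun i => Complex.exp (c * d i) := by
  rw [← diagonal_smul, Matrix.exp_diagonal]
  congr 1
  funext i
  rw [Pi.coe_exp, ← Complex.exp_eq_exp_ℂ, Pi.smul_apply, smul_eq_mul]

theorem exp_smul_diagonal_conj_apply (c : ℂ) (d : n → ℂ) (M : Matrix n n ℂ) (i j : n) :
    (NormedSpace.exp (c • diagonal d) * M * NormedSpace.exp (-c • diagonal d)) i j =
      Complex.exp (c * (d i - d j)) * M i j := by
  rw [exp_smul_diagonal, exp_smul_diagonal, mul_diagonal, diagonal_mul, mul_sub, sub_eq_add_neg,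
    Complex.exp_add, neg_mul]
  ring

end

theorem gateExpectation_pauliX (r s θ : ℝ) :
    gateExpectation ![(s : ℂ), s] (diagonal ![(r : ℂ), -r]) !![0, 1; 1, 0] θ =
      2 * s ^ 2 * Real.cos (2 * r * θ) := by
  simp only [gateExpectation, dotProduct, mulVec, Fin.sum_univ_two, exp_smul_diagonal_conj_apply,
    Fin.isValue, Pi.star_apply, cons_val_zero, RCLike.star_def, Complex.conj_ofReal, sub_self,
    mul_zero, Complex.exp_zero, of_apply, cons_val', cons_val_fin_one, zero_mul, cons_val_one,
    sub_neg_eq_add, mul_one, zero_add, add_zero, Complex.add_re, Complex.mul_re,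
    Complex.ofReal_re, Complex.ofReal_im, sub_zero, Complex.mul_im]
  rw [show Complex.I * θ * (r + r) = ((2 * r * θ : ℝ) : ℂ) * Complex.I by push_cast; ring,
    show Complex.I * θ * (-r - r) = ((-(2 * r * θ) : ℝ) : ℂ) * Complex.I by push_cast; ring,
    Complex.exp_ofReal_mul_I_re, Complex.exp_ofReal_mul_I_re, Real.cos_neg]
  ring

theorem isHermitian_pauliX : (!![0, 1; 1, 0] : Matrix (Fin 2) (Fin 2) ℂ).IsHermitian := by
  ext i j
  fin_cases i <;> fin_cases j <;> simp

theorem isHermitian_diagonal_ofReal_neg (r : ℝ) : (diagonal ![(r : ℂ), -r]).IsHermitian :=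
  isHermitian_diagonal_of_self_adjoint _ (by ext i; fin_cases i <;> simp)

theorem diagonal_ofReal_neg_mul_self (r : ℝ) :
    diagonal ![(r : ℂ), -r] * diagonal ![(r : ℂ), -r] =
      ((r : ℂ) ^ 2) • (1 : Matrix (Fin 2) (Fin 2) ℂ) := by
  rw [diagonal_mul_diagonal, ← diagonal_one, ← diagonal_smul]
  congr 1
  funext i
  fin_cases i <;> simp [sq]

theorem two_mul_inv_sqrt_two_sq : 2 * (√2)⁻¹ ^ 2 = (1 : ℝ) := by
  rw [inv_pow, Real.sq_sqrt zero_le_two]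
  norm_num

theorem hasDerivAt_cos_const_mul (c x : ℝ) :
    HasDerivAt (fun θ => Real.cos (c * θ)) (-Real.sin (c * x) * c) x := by
  simpa using ((hasDerivAt_id x).const_mul c).cos

theorem stmt_13 (r γ : ℝ) (hr : 0 < r) (hγ : 0 < γ) (hγ' : γ < Real.pi / r) :
    ∃ (ψ ψ' : Fin 2 → ℂ) (A B G F : Matrix (Fin 2) (Fin 2) ℂ) (f f' : ℝ → ℝ) (ζ : ℝ),
      star ψ ⬝ᵥ ψ = 1 ∧ star ψ' ⬝ᵥ ψ' = 1 ∧
      A.IsHermitian ∧ B.IsHermitian ∧ G.IsHermitian ∧ F.IsHermitian ∧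
      G * G = ((r : ℂ) ^ 2) • (1 : Matrix (Fin 2) (Fin 2) ℂ) ∧
      F * F = ((r : ℂ) ^ 2) • (1 : Matrix (Fin 2) (Fin 2) ℂ) ∧
      (∀ θ : ℝ, f θ =
        (star ψ ⬝ᵥ ((NormedSpace.exp ((Complex.I * (θ : ℂ)) • G) * A *
          NormedSpace.exp ((-(Complex.I * (θ : ℂ))) • G)) *ᵥ ψ)).re) ∧
      (∀ θ : ℝ, f' θ =
        (star ψ' ⬝ᵥ ((NormedSpace.exp ((Complex.I * (θ : ℂ)) • F) * B *
          NormedSpace.exp ((-(Complex.I * (θ : ℂ))) • F)) *ᵥ ψ')).re) ∧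
      f ζ = f' ζ ∧ f (ζ + γ) = f' (ζ + γ) ∧ deriv f ζ ≠ deriv f' ζ := by
  set G := diagonal ![(r : ℂ), -r]
  set s : ℝ := (√2)⁻¹
  have hψ : star ![(1 : ℂ), 0] ⬝ᵥ ![1, 0] = 1 := by simp [dotProduct]
  have hψ' : star ![(s : ℂ), s] ⬝ᵥ ![(s : ℂ), s] = 1 := by
    simp only [dotProduct, Fin.sum_univ_two, Pi.star_apply, cons_val_zero, cons_val_one,
      cons_val_fin_one, RCLike.star_def, Complex.conj_ofReal, ← two_mul, ← sq]
    exact_mod_cast two_mul_inv_sqrt_two_sq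
  have hf : gateExpectation ![1, 0] G ((Real.cos (r * γ) : ℂ) • 1) = fun _ => Real.cos (r * γ) := by
    funext θ
    rw [gateExpectation_smul_one, hψ, Complex.one_re, mul_one]
  have hf' : gateExpectation ![(s : ℂ), s] G !![0, 1; 1, 0] = fun θ => Real.cos (2 * r * θ) := by
    funext θ
    rw [gateExpectation_pauliX, two_mul_inv_sqrt_two_sq, one_mul]
  have hsin : 0 < Real.sin (r * γ) :=
    Real.sin_pos_of_pos_of_lt_pi (by positivity) (by rwa [lt_div_iff₀ hr, mul_comm] at hγ')
  refine ⟨_, _, (Real.cos (r * γ) : ℂ) • 1, !![0, 1; 1, 0], G, G,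
    gateExpectation ![1, 0] G ((Real.cos (r * γ) : ℂ) • 1),
    gateExpectation ![(s : ℂ), s] G !![0, 1; 1, 0], -(γ / 2), hψ, hψ',
    isHermitian_one.smul (Complex.conj_ofReal _),
    isHermitian_pauliX, isHermitian_diagonal_ofReal_neg r, isHermitian_diagonal_ofReal_neg r,
    diagonal_ofReal_neg_mul_self r, diagonal_ofReal_neg_mul_self r, fun _ => rfl, fun _ => rfl,
    ?_, ?_, ?_⟩
  all_goals simp only [hf, hf']
  · rw [show 2 * r * -(γ / 2) = -(r * γ) by ring, Real.cos_neg]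
  · rw [show 2 * r * (-(γ / 2) + γ) = r * γ by ring]
  · rw [deriv_const, (hasDerivAt_cos_const_mul _ _).deriv, show 2 * r * -(γ / 2) = -(r * γ) by ring,
      Real.sin_neg]
    nlinarith
end

section
/- Let f(θ₁, θ₂) = ⟨ψ| e^{iθ₁G₁} e^{iθ₂G₂} A e^{-iθ₂G₂} e^{-iθ₁G₁} |ψ⟩ where G₁, G₂ are commuting Hermitian matrices with G₁² = G₂² = r²I. Then the mixed partial derivative satisfies ∂²f/∂θ₁∂θ₂ (θ₁, θ₂) = r²·[f(θ₁+γ₁, θ₂+γ₂) + f(θ₁-γ₁, θ₂-γ₂) - f(θ₁+γ₁, θ₂-γ₂) - f(θ₁-γ₁, θ₂+γ₂)] / (sin(2rγ₁)·sin(2rγ₂)) for any γ₁, γ₂ with sin(2rγ₁)·sin(2rγ₂) ≠ 0. -/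
/-!
Since `G² = r²`, the involution `P = G / r` gives `exp (iθG) = cos (rθ) + i sin (rθ) P`, so
conjugating any operator by `exp (iθG)` yields `a + cos (2rθ) b + sin (2rθ) c`. For a function of
this shape the centered difference is an exact derivative:
`g' θ = r (g (θ + γ) - g (θ - γ)) / sin (2rγ)`. The expectation value `f` has this shape in each
variable separately, so applying the one-variable rule in `θ₂` and then in `θ₁` gives the formula.
-/

open Matrix Real

theorem NormedSpace.exp_smul_of_mul_self_eq_one {𝔸 : Type*} [Ring 𝔸] [Algebra ℂ 𝔸]
    [TopologicalSpace 𝔸] [IsTopologicalRing 𝔸] [ContinuousSMul ℂ 𝔸] [T2Space 𝔸]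
    {P : 𝔸} (hP : P * P = 1) (z : ℂ) :
    NormedSpace.exp (z • P) = Complex.cosh z • 1 + Complex.sinh z • P := by
  have hP_even : ∀ k : ℕ, P ^ (2 * k) = 1 := fun k => by rw [pow_mul, sq, hP, one_pow]
  rw [NormedSpace.exp_eq_tsum ℂ]
  refine HasSum.tsum_eq (HasSum.even_add_odd ?_ ?_)
  · convert (Complex.hasSum_cosh z).smul_const (1 : 𝔸) using 2 with k
    rw [smul_pow, hP_even, smul_smul, div_eq_inv_mul]
  · convert (Complex.hasSum_sinh z).smul_const P using 2 with k
    rw [smul_pow, pow_succ P, hP_even, one_mul, smul_smul, div_eq_inv_mul]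

def IsSinusoid {E : Type*} [AddCommGroup E] [Module ℝ E] (ω : ℝ) (F : ℝ → E) : Prop :=
  ∃ a b c : E, ∀ x, F x = a + cos (ω * x) • b + sin (ω * x) • c

theorem IsSinusoid.map {E E' : Type*} [AddCommGroup E] [Module ℝ E] [AddCommGroup E']
    [Module ℝ E'] {ω : ℝ} {F : ℝ → E} (hF : IsSinusoid ω F) (Φ : E →ₗ[ℝ] E') :
    IsSinusoid ω fun x => Φ (F x) := by
  obtain ⟨a, b, c, hF⟩ := hF
  exact ⟨Φ a, Φ b, Φ c, fun x => by simp [hF]⟩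

section ParameterShift

variable {E : Type*} [NormedAddCommGroup E] [NormedSpace ℝ E] {ω : ℝ}

theorem IsSinusoid.hasDerivAt {F : ℝ → E} (hF : IsSinusoid ω F) {γ : ℝ}
    (hγ : sin (ω * γ) ≠ 0) (x : ℝ) :
    HasDerivAt F ((ω / (2 * sin (ω * γ))) • (F (x + γ) - F (x - γ))) x := by
  obtain ⟨a, b, c, hF⟩ := hF
  rw [funext hF]
  have hlin : HasDerivAt (fun y => ω * y) ω x := by simpa using (hasDerivAt_id x).const_mul ω
  refine (((hasDerivAt_const x a).add (hlin.cos.smul_const b)).add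
    (hlin.sin.smul_const c)).congr_deriv ?_
  simp only [mul_add, mul_sub, sin_add, cos_add, sin_sub, cos_sub]
  match_scalars <;> field_simp <;> ring

theorem deriv_deriv_eq_of_isSinusoid {f : ℝ → ℝ → E}
    (h₁ : ∀ y, IsSinusoid ω fun x => f x y) (h₂ : ∀ x, IsSinusoid ω (f x))
    {γ₁ γ₂ : ℝ} (hγ₁ : sin (ω * γ₁) ≠ 0) (hγ₂ : sin (ω * γ₂) ≠ 0) (θ₁ θ₂ : ℝ) :
    deriv (fun t₁ => deriv (fun t₂ => f t₁ t₂) θ₂) θ₁ =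
      (ω / (2 * sin (ω * γ₁)) * (ω / (2 * sin (ω * γ₂)))) •
        (f (θ₁ + γ₁) (θ₂ + γ₂) + f (θ₁ - γ₁) (θ₂ - γ₂)
          - f (θ₁ + γ₁) (θ₂ - γ₂) - f (θ₁ - γ₁) (θ₂ + γ₂)) := by
  have hinner : (fun t₁ => deriv (fun t₂ => f t₁ t₂) θ₂) =
      fun t₁ => (ω / (2 * sin (ω * γ₂))) • (f t₁ (θ₂ + γ₂) - f t₁ (θ₂ - γ₂)) :=
    funext fun t₁ => ((h₂ t₁).hasDerivAt hγ₂ θ₂).deriv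
  have houter : HasDerivAt
      (fun t₁ => (ω / (2 * sin (ω * γ₂))) • (f t₁ (θ₂ + γ₂) - f t₁ (θ₂ - γ₂))) _ θ₁ :=
    (((h₁ _).hasDerivAt hγ₁ θ₁).sub ((h₁ _).hasDerivAt hγ₁ θ₁)).const_smul _
  rw [hinner, houter.deriv]
  module

end ParameterShift

theorem isSinusoid_exp_conj {𝔸 : Type*} [Ring 𝔸] [Algebra ℂ 𝔸] [TopologicalSpace 𝔸]
    [IsTopologicalRing 𝔸] [ContinuousSMul ℂ 𝔸] [T2Space 𝔸] {G : 𝔸} {r : ℝ} (hr : r ≠ 0)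
    (hG : G * G = (r : ℂ) ^ 2 • (1 : 𝔸)) (B : 𝔸) :
    IsSinusoid (2 * r) fun x : ℝ =>
      NormedSpace.exp ((Complex.I * x) • G) * B * NormedSpace.exp ((-(Complex.I * x)) • G) := by
  set P : 𝔸 := (r : ℂ)⁻¹ • G with hP_def
  have hr' : (r : ℂ) ≠ 0 := by exact_mod_cast hr
  have hP : P * P = 1 := by
    rw [hP_def, smul_mul_smul, hG, smul_smul]
    field_simp
    simp
  have hexp : ∀ x : ℝ, NormedSpace.exp ((Complex.I * x) • G) =
      (cos (r * x) : ℂ) • 1 + (sin (r * x) * Complex.I) • P := by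
    intro x
    have hexponent : (Complex.I * x) • G = ((r * x : ℝ) * Complex.I : ℂ) • P := by
      rw [hP_def, smul_smul]
      congr 1
      push_cast
      field_simp
    rw [hexponent, NormedSpace.exp_smul_of_mul_self_eq_one hP, Complex.cosh_mul_I,
      Complex.sinh_mul_I, ← Complex.ofReal_cos, ← Complex.ofReal_sin]
  refine ⟨(1 / 2 : ℝ) • (B + P * B * P), (1 / 2 : ℝ) • (B - P * B * P),
    (1 / 2 : ℝ) • (Complex.I • (P * B - B * P)), fun x => ?_⟩
  beta_reduce
  rw [hexp, ← mul_neg, ← Complex.ofReal_neg, hexp, mul_neg, cos_neg, sin_neg,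
    show 2 * r * x = 2 * (r * x) by ring, cos_two_mul, sin_two_mul]
  simp only [← Complex.coe_smul, add_mul, mul_add, smul_mul_assoc, mul_smul_comm, one_mul,
    mul_one, smul_smul, smul_add, smul_sub]
  match_scalars
  · ring
  · ring
  · ring
  · linear_combination (-Complex.sin (r * x) ^ 2) * Complex.I_sq + Complex.sin_sq_add_cos_sq (r * x)

def Matrix.reExpectation {m : Type*} [Fintype m] (ψ : m → ℂ) : Matrix m m ℂ →ₗ[ℝ] ℝ where
  toFun X := (star ψ ⬝ᵥ X *ᵥ ψ).re
  map_add' X Y := by simp [add_mulVec]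
  map_smul' c X := by simp [smul_mulVec]

theorem stmt_15_general {n : ℕ} (ψ : Fin n → ℂ)
    (A G₁ G₂ : Matrix (Fin n) (Fin n) ℂ)
    (r : ℝ)
    (hG₁2 : G₁ * G₁ = ((r : ℂ) ^ 2) • (1 : Matrix (Fin n) (Fin n) ℂ))
    (hG₂2 : G₂ * G₂ = ((r : ℂ) ^ 2) • (1 : Matrix (Fin n) (Fin n) ℂ))
    (f : ℝ → ℝ → ℝ)
    (hf : ∀ θ₁ θ₂ : ℝ, f θ₁ θ₂ =
      (star ψ ⬝ᵥ ((NormedSpace.exp ((Complex.I * (θ₁ : ℂ)) • G₁) *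
        NormedSpace.exp ((Complex.I * (θ₂ : ℂ)) • G₂) * A *
        NormedSpace.exp ((-(Complex.I * (θ₂ : ℂ))) • G₂) *
        NormedSpace.exp ((-(Complex.I * (θ₁ : ℂ))) • G₁)) *ᵥ ψ)).re)
    (θ₁ θ₂ γ₁ γ₂ : ℝ)
    (hγ : Real.sin (2 * r * γ₁) * Real.sin (2 * r * γ₂) ≠ 0) :
    deriv (fun t₁ => deriv (fun t₂ => f t₁ t₂) θ₂) θ₁ =
      r ^ 2 * (f (θ₁ + γ₁) (θ₂ + γ₂) + f (θ₁ - γ₁) (θ₂ - γ₂)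
        - f (θ₁ + γ₁) (θ₂ - γ₂) - f (θ₁ - γ₁) (θ₂ + γ₂))
        / (Real.sin (2 * r * γ₁) * Real.sin (2 * r * γ₂)) := by
  obtain ⟨hγ₁, hγ₂⟩ := mul_ne_zero_iff.mp hγ
  have hr : r ≠ 0 := by rintro rfl; simp at hγ₁
  set U := fun (G : Matrix (Fin n) (Fin n) ℂ) (θ : ℝ) => NormedSpace.exp ((Complex.I * θ) • G)
  set V := fun (G : Matrix (Fin n) (Fin n) ℂ) (θ : ℝ) => NormedSpace.exp ((-(Complex.I * θ)) • G)
  obtain rfl : f = fun θ₁ θ₂ => reExpectation ψ (U G₁ θ₁ * (U G₂ θ₂ * A * V G₂ θ₂) * V G₁ θ₁) := by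
    funext θ₁ θ₂
    simp only [hf, mul_assoc]
    rfl
  have h₁ : ∀ θ₂, IsSinusoid (2 * r) fun θ₁ =>
      reExpectation ψ (U G₁ θ₁ * (U G₂ θ₂ * A * V G₂ θ₂) * V G₁ θ₁) := fun θ₂ =>
    (isSinusoid_exp_conj hr hG₁2 _).map _
  have h₂ : ∀ θ₁, IsSinusoid (2 * r) fun θ₂ =>
      reExpectation ψ (U G₁ θ₁ * (U G₂ θ₂ * A * V G₂ θ₂) * V G₁ θ₁) := fun θ₁ =>
    (isSinusoid_exp_conj hr hG₂2 A).map
      (reExpectation ψ ∘ₗ LinearMap.mulRight ℝ (V G₁ θ₁) ∘ₗ LinearMap.mulLeft ℝ (U G₁ θ₁))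
  rw [deriv_deriv_eq_of_isSinusoid h₁ h₂ hγ₁ hγ₂, smul_eq_mul]
  field_simp

theorem stmt_15 {n : ℕ} (ψ : Fin n → ℂ) (hψ : star ψ ⬝ᵥ ψ = 1)
    (A G₁ G₂ : Matrix (Fin n) (Fin n) ℂ)
    (hA : A.IsHermitian) (hG₁ : G₁.IsHermitian) (hG₂ : G₂.IsHermitian)
    (hcomm : G₁ * G₂ = G₂ * G₁)
    (r : ℝ) (hr : 0 < r)
    (hG₁2 : G₁ * G₁ = ((r : ℂ) ^ 2) • (1 : Matrix (Fin n) (Fin n) ℂ))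
    (hG₂2 : G₂ * G₂ = ((r : ℂ) ^ 2) • (1 : Matrix (Fin n) (Fin n) ℂ))
    (f : ℝ → ℝ → ℝ)
    (hf : ∀ θ₁ θ₂ : ℝ, f θ₁ θ₂ =
      (star ψ ⬝ᵥ ((NormedSpace.exp ((Complex.I * (θ₁ : ℂ)) • G₁) *
        NormedSpace.exp ((Complex.I * (θ₂ : ℂ)) • G₂) * A *
        NormedSpace.exp ((-(Complex.I * (θ₂ : ℂ))) • G₂) *
        NormedSpace.exp ((-(Complex.I * (θ₁ : ℂ))) • G₁)) *ᵥ ψ)).re)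
    (θ₁ θ₂ γ₁ γ₂ : ℝ)
    (hγ : Real.sin (2 * r * γ₁) * Real.sin (2 * r * γ₂) ≠ 0) :
    deriv (fun t₁ => deriv (fun t₂ => f t₁ t₂) θ₂) θ₁ =
      r ^ 2 * (f (θ₁ + γ₁) (θ₂ + γ₂) + f (θ₁ - γ₁) (θ₂ - γ₂)
        - f (θ₁ + γ₁) (θ₂ - γ₂) - f (θ₁ - γ₁) (θ₂ + γ₂))
        / (Real.sin (2 * r * γ₁) * Real.sin (2 * r * γ₂)) :=
  stmt_15_general ψ A G₁ G₂ r hG₁2 hG₂2 f hf θ₁ θ₂ γ₁ γ₂ hγ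
end
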